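/- arXiv:2307.09786 — 2 statements merged into one kernel-verified Lean document; each statement's English description precedes it below -/
import Mathlib

section
/- Under the CFL condition Δt/Δx ≤ 1/(γ₀‖v'‖‖ρ‖ + 2‖v‖), with ‖v‖ = max(‖v₁‖_∞, ‖v₂‖_∞), ‖v'‖ = max(‖v₁'‖_∞, ‖v₂'‖_∞), ‖ρ‖ = max(ρ¹_max, ρ²_max), the sequence generated by the finite volume scheme for the non-local 1-to-1 junction model with buffer satisfies the maximum principle 0 ≤ ρ^n_{e,j} ≤ ρ^e_max for all n ∈ ℕ, j ∈ ℤ, e ∈ {1,2}. -/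
open Finset

lemma tele_sum (m : ℕ) (γ c : ℕ → ℝ) (hmono : Antitone γ) (hpos : ∀ k, 0 ≤ γ k)
    (p q : ℕ → Prop) [DecidablePred p] [DecidablePred q]
    (hpq : ∀ k, p (k + 1) ↔ q k)
    (hc : ∀ k, q k → 0 ≤ c (k + 1)) :
    ∑ k ∈ Finset.range (m + 1), (if p k then γ k * c k else 0)
      ≤ (∑ k ∈ Finset.range (m + 1), if q k then γ k * c (k + 1) else 0)
        + (if p 0 then γ 0 * c 0 else 0) := by
  rw [Finset.sum_range_succ']
  have h1 : ∀ k ∈ Finset.range m,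
      (if p (k + 1) then γ (k + 1) * c (k + 1) else 0)
        ≤ (if q k then γ k * c (k + 1) else 0) := by
    intro k _
    by_cases h : q k
    · rw [if_pos ((hpq k).mpr h), if_pos h]
      exact mul_le_mul_of_nonneg_right (hmono (Nat.le_succ k)) (hc k h)
    · rw [if_neg (fun hp => h ((hpq k).mp hp)), if_neg h]
  have h2 : ∑ k ∈ Finset.range m, (if q k then γ k * c (k + 1) else 0)
      ≤ ∑ k ∈ Finset.range (m + 1), (if q k then γ k * c (k + 1) else 0) := by
    apply Finset.sum_le_sum_of_subset_of_nonneg (Finset.range_subset_range.mpr (Nat.le_succ m))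
    intro k _ _
    by_cases h : q k
    · rw [if_pos h]; exact mul_nonneg (hpos k) (hc k h)
    · rw [if_neg h]
  have h3 := Finset.sum_le_sum h1
  linarith


set_option maxHeartbeats 1600000 in
/-- Discrete maximum principle for the finite volume scheme of the non-local
1-to-1 junction model with buffer: under the CFL condition
`Δt/Δx ≤ 1/(γ₀‖v'‖‖ρ‖ + 2‖v‖)`, the scheme
`ρⁿ⁺¹_{e,j} = ρⁿ_{e,j} − (Δt/Δx)(Fⁿ_{e,j} − Fⁿ_{e,j−1})` with
`Fⁿ_{1,j} = ρⁿ_{1,j}Vⁿ_{1,j} + min(ρⁿ_{1,j}Vⁿ_{2,j}, sⁿ_{B,j})`,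
`Fⁿ_{2,j} = ρⁿ_{2,j}Vⁿ_{2,j}` (with the buffer outflow as inflow at `j = 0`),
satisfies `0 ≤ ρⁿ_{e,j} ≤ ρᵉ_max` for all `n` and all cells `j` of road `e`. -/
theorem stmt_5
    (ρ1max ρ2max μ rmax Δt Δx nv nv' : ℝ) (Nη : ℕ)
    (γ : ℕ → ℝ) (v1 v2 : ℝ → ℝ)
    (ρ1 ρ2 : ℕ → ℤ → ℝ) (r : ℕ → ℝ)
    (V1 V2 sB F1 F2 : ℕ → ℤ → ℝ) (dB : ℕ → ℝ)
    -- parameters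
    (hρ1max : 0 < ρ1max) (hρ2max : 0 < ρ2max) (hμ : 0 < μ) (hrmax : 0 < rmax)
    (hΔt : 0 < Δt) (hΔx : 0 < Δx) (hNη : 0 < Nη)
    -- kernel weights
    (hγ0 : ∀ k, 0 ≤ γ k) (hγmono : Antitone γ)
    (hγmass : ∑ k ∈ Finset.range Nη, γ k = 1)
    -- velocity functions
    (hv1mono : Antitone v1) (hv2mono : Antitone v2)
    (hv1pos : 0 < v1 0) (hv2pos : 0 < v2 0)
    (hv1zero : ∀ x : ℝ, ρ1max ≤ x → v1 x = 0)
    (hv2zero : ∀ x : ℝ, ρ2max ≤ x → v2 x = 0)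
    (hnv : ∀ x ∈ Set.Icc (0:ℝ) (max ρ1max ρ2max), v1 x ≤ nv ∧ v2 x ≤ nv)
    (hnv' : ∀ a b : ℝ, |v1 a - v1 b| ≤ nv' * |a - b| ∧ |v2 a - v2 b| ≤ nv' * |a - b|)
    (hnvpos : 0 < nv) (hnv'pos : 0 < nv')
    -- CFL condition
    (hCFL : Δt / Δx ≤ 1 / (γ 0 * nv' * max ρ1max ρ2max + 2 * nv))
    -- discrete non-local velocities
    (hV1 : ∀ (n : ℕ) (j : ℤ), V1 n j =
      ∑ k ∈ Finset.range Nη,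
        if (k : ℤ) ≤ -j - 2 then γ k * v1 (ρ1 n (j + k + 1)) else 0)
    (hV2 : ∀ (n : ℕ) (j : ℤ), V2 n j =
      ∑ k ∈ Finset.range Nη,
        if -j - 1 ≤ (k : ℤ) then γ k * v2 (ρ2 n (j + k + 1)) else 0)
    -- discrete supply and demand of the buffer
    (hsB : ∀ (n : ℕ) (j : ℤ), sB n j =
      if r n = rmax then
        min (ρ2max * V2 n j) (μ * ∑ k ∈ Finset.range Nη, if -j - 1 ≤ (k : ℤ) then γ k else 0)
      else μ * ∑ k ∈ Finset.range Nη, if -j - 1 ≤ (k : ℤ) then γ k else 0)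
    (hdB : ∀ n : ℕ, dB n =
      if r n = 0 then min (ρ1 n (-1) * V2 n (-1)) μ else μ)
    -- numerical fluxes
    (hF1 : ∀ (n : ℕ) (j : ℤ), F1 n j =
      ρ1 n j * V1 n j + min (ρ1 n j * V2 n j) (sB n j))
    (hF2 : ∀ (n : ℕ) (j : ℤ), F2 n j =
      if j = -1 then min (dB n) (ρ2max * V2 n (-1)) else ρ2 n j * V2 n j)
    -- finite volume updates
    (hup1 : ∀ (n : ℕ) (j : ℤ), j < 0 →
      ρ1 (n + 1) j = ρ1 n j - Δt / Δx * (F1 n j - F1 n (j - 1)))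
    (hup2 : ∀ (n : ℕ) (j : ℤ), 0 ≤ j →
      ρ2 (n + 1) j = ρ2 n j - Δt / Δx * (F2 n j - F2 n (j - 1)))
    (hupr : ∀ n : ℕ, r (n + 1) = r n +
      Δt * (min (sB n 0) (ρ1 n 0 * V2 n 0) - min (dB n) (ρ2max * V2 n 0)))
    -- initial data
    (h01 : ∀ j : ℤ, j < 0 → 0 ≤ ρ1 0 j ∧ ρ1 0 j ≤ ρ1max)
    (h02 : ∀ j : ℤ, 0 ≤ j → 0 ≤ ρ2 0 j ∧ ρ2 0 j ≤ ρ2max) :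
    ∀ n : ℕ, (∀ j : ℤ, j < 0 → 0 ≤ ρ1 n j ∧ ρ1 n j ≤ ρ1max) ∧
      (∀ j : ℤ, 0 ≤ j → 0 ≤ ρ2 n j ∧ ρ2 n j ≤ ρ2max) := by
  obtain ⟨m, rfl⟩ := Nat.exists_eq_succ_of_ne_zero hNη.ne'
  have hRpos : 0 < max ρ1max ρ2max := lt_of_lt_of_le hρ1max (le_max_left _ _)
  have hlam : 0 ≤ Δt / Δx := by positivity
  have hγR : 0 ≤ γ 0 * nv' * max ρ1max ρ2max :=
    mul_nonneg (mul_nonneg (hγ0 0) hnv'pos.le) hRpos.le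
  have hDpos : 0 < γ 0 * nv' * max ρ1max ρ2max + 2 * nv := by linarith
  have hlamD : Δt / Δx * (γ 0 * nv' * max ρ1max ρ2max + 2 * nv) ≤ 1 :=
    (le_div_iff₀ hDpos).mp hCFL
  have h2nv : Δt / Δx * (2 * nv) ≤ 1 := by nlinarith [mul_nonneg hlam hγR]
  -- velocity function facts
  have hv1nn : ∀ x : ℝ, x ≤ ρ1max → 0 ≤ v1 x := by
    intro x hx; have := hv1mono hx; rwa [hv1zero ρ1max le_rfl] at this
  have hv2nn : ∀ x : ℝ, x ≤ ρ2max → 0 ≤ v2 x := by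
    intro x hx; have := hv2mono hx; rwa [hv2zero ρ2max le_rfl] at this
  have hv1le : ∀ x : ℝ, 0 ≤ x → x ≤ ρ1max → v1 x ≤ nv :=
    fun x h0 h1 => (hnv x ⟨h0, h1.trans (le_max_left _ _)⟩).1
  have hv2le : ∀ x : ℝ, 0 ≤ x → x ≤ ρ2max → v2 x ≤ nv :=
    fun x h0 h1 => (hnv x ⟨h0, h1.trans (le_max_right _ _)⟩).2
  have hv1lip : ∀ x : ℝ, x ≤ ρ1max → v1 x ≤ nv' * (ρ1max - x) := by
    intro x hx
    have h := (hnv' x ρ1max).1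
    rw [hv1zero ρ1max le_rfl, sub_zero] at h
    have h2 : |x - ρ1max| = ρ1max - x := by rw [abs_of_nonpos (by linarith)]; ring
    calc v1 x ≤ |v1 x| := le_abs_self _
      _ ≤ nv' * |x - ρ1max| := h
      _ = nv' * (ρ1max - x) := by rw [h2]
  have hv2lip : ∀ x : ℝ, x ≤ ρ2max → v2 x ≤ nv' * (ρ2max - x) := by
    intro x hx
    have h := (hnv' x ρ2max).2
    rw [hv2zero ρ2max le_rfl, sub_zero] at h
    have h2 : |x - ρ2max| = ρ2max - x := by rw [abs_of_nonpos (by linarith)]; ring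
    calc v2 x ≤ |v2 x| := le_abs_self _
      _ ≤ nv' * |x - ρ2max| := h
      _ = nv' * (ρ2max - x) := by rw [h2]
  intro n
  induction n with
  | zero => exact ⟨h01, h02⟩
  | succ n ih =>
    obtain ⟨ih1, ih2⟩ := ih
    -- bounds on the non-local velocities
    have hV1nn : ∀ j : ℤ, 0 ≤ V1 n j := by
      intro j; rw [hV1]
      apply Finset.sum_nonneg; intro k _
      split_ifs with h
      · exact mul_nonneg (hγ0 k) (hv1nn _ ((ih1 (j + k + 1) (by omega)).2))
      · exact le_rfl
    have hV2nn : ∀ j : ℤ, 0 ≤ V2 n j := by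
      intro j; rw [hV2]
      apply Finset.sum_nonneg; intro k _
      split_ifs with h
      · exact mul_nonneg (hγ0 k) (hv2nn _ ((ih2 (j + k + 1) (by omega)).2))
      · exact le_rfl
    have hV1le : ∀ j : ℤ, V1 n j ≤ nv := by
      intro j; rw [hV1]
      calc (∑ k ∈ Finset.range (m + 1),
            if (k : ℤ) ≤ -j - 2 then γ k * v1 (ρ1 n (j + k + 1)) else 0)
          ≤ ∑ k ∈ Finset.range (m + 1), γ k * nv := by
            apply Finset.sum_le_sum; intro k _
            split_ifs with h
            · exact mul_le_mul_of_nonneg_left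
                (hv1le _ (ih1 _ (by omega)).1 (ih1 _ (by omega)).2) (hγ0 k)
            · exact mul_nonneg (hγ0 k) hnvpos.le
        _ = nv := by rw [← Finset.sum_mul, hγmass, one_mul]
    have hV2le : ∀ j : ℤ, V2 n j ≤ nv := by
      intro j; rw [hV2]
      calc (∑ k ∈ Finset.range (m + 1),
            if -j - 1 ≤ (k : ℤ) then γ k * v2 (ρ2 n (j + k + 1)) else 0)
          ≤ ∑ k ∈ Finset.range (m + 1), γ k * nv := by
            apply Finset.sum_le_sum; intro k _
            split_ifs with h
            · exact mul_le_mul_of_nonneg_left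
                (hv2le _ (ih2 _ (by omega)).1 (ih2 _ (by omega)).2) (hγ0 k)
            · exact mul_nonneg (hγ0 k) hnvpos.le
        _ = nv := by rw [← Finset.sum_mul, hγmass, one_mul]
    -- telescoping estimates
    have htelV1 : ∀ j : ℤ, j < 0 → V1 n (j - 1) ≤ V1 n j + γ 0 * v1 (ρ1 n j) := by
      intro j hj
      have key := tele_sum m γ (fun k : ℕ => v1 (ρ1 n (j + (k : ℤ))))
        hγmono hγ0 (fun k : ℕ => ((k : ℤ) ≤ -j - 1)) (fun k : ℕ => ((k : ℤ) ≤ -j - 2))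
        (by intro k; push_cast; omega)
        (by
          intro k hk
          have hidx : (j + ((k + 1 : ℕ) : ℤ)) = j + k + 1 := by push_cast; ring
          simp only [hidx]
          exact hv1nn _ ((ih1 (j + k + 1) (by omega)).2))
      have e1 : V1 n (j - 1) = ∑ k ∈ Finset.range (m + 1),
          (if (k : ℤ) ≤ -j - 1 then γ k * v1 (ρ1 n (j + (k : ℤ))) else 0) := by
        rw [hV1]
        apply Finset.sum_congr rfl; intro k _
        rw [show (-(j - 1) - 2 : ℤ) = -j - 1 from by ring,
          show (j - 1 + (k : ℤ) + 1) = j + k from by ring]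
      have e2 : V1 n j = ∑ k ∈ Finset.range (m + 1),
          (if (k : ℤ) ≤ -j - 2 then γ k * v1 (ρ1 n (j + ((k + 1 : ℕ) : ℤ))) else 0) := by
        rw [hV1]
        apply Finset.sum_congr rfl; intro k _
        rw [show (j + ((k + 1 : ℕ) : ℤ)) = j + k + 1 from by push_cast; ring]
      rw [e1, e2]
      have hp0 : (((0 : ℕ) : ℤ) ≤ -j - 1) := by push_cast; omega
      rw [if_pos hp0] at key
      simpa using key
    have htelV2 : ∀ j : ℤ, V2 n (j - 1) ≤ V2 n j +
        (if (-j : ℤ) ≤ 0 then γ 0 * v2 (ρ2 n j) else 0) := by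
      intro j
      have key := tele_sum m γ (fun k : ℕ => v2 (ρ2 n (j + (k : ℤ))))
        hγmono hγ0 (fun k : ℕ => ((-j : ℤ) ≤ k)) (fun k : ℕ => ((-j - 1 : ℤ) ≤ k))
        (by intro k; push_cast; omega)
        (by
          intro k hk
          have hidx : (j + ((k + 1 : ℕ) : ℤ)) = j + k + 1 := by push_cast; ring
          simp only [hidx]
          exact hv2nn _ ((ih2 (j + k + 1) (by omega)).2))
      have e1 : V2 n (j - 1) = ∑ k ∈ Finset.range (m + 1),
          (if (-j : ℤ) ≤ k then γ k * v2 (ρ2 n (j + (k : ℤ))) else 0) := by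
        rw [hV2]
        apply Finset.sum_congr rfl; intro k _
        rw [show (-(j - 1) - 1 : ℤ) = -j from by ring,
          show (j - 1 + (k : ℤ) + 1) = j + k from by ring]
      have e2 : V2 n j = ∑ k ∈ Finset.range (m + 1),
          (if (-j - 1 : ℤ) ≤ k then γ k * v2 (ρ2 n (j + ((k + 1 : ℕ) : ℤ))) else 0) := by
        rw [hV2]
        apply Finset.sum_congr rfl; intro k _
        rw [show (j + ((k + 1 : ℕ) : ℤ)) = j + k + 1 from by push_cast; ring]
      rw [e1, e2]
      simpa using key
    have htelV2neg : ∀ j : ℤ, j < 0 → V2 n (j - 1) ≤ V2 n j := by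
      intro j hj
      have := htelV2 j
      rwa [if_neg (by omega), add_zero] at this
    -- supply facts
    have hGnn : ∀ j : ℤ, 0 ≤ ∑ k ∈ Finset.range (m + 1),
        (if -j - 1 ≤ (k : ℤ) then γ k else 0) := by
      intro j
      apply Finset.sum_nonneg; intro k _
      split_ifs
      · exact hγ0 k
      · exact le_rfl
    have hGmono : ∀ j : ℤ,
        (∑ k ∈ Finset.range (m + 1), if -(j - 1) - 1 ≤ (k : ℤ) then γ k else 0)
          ≤ ∑ k ∈ Finset.range (m + 1), if -j - 1 ≤ (k : ℤ) then γ k else 0 := by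
      intro j
      apply Finset.sum_le_sum; intro k _
      split_ifs with h1 h2
      · exact le_rfl
      · exact absurd (by omega : (-j - 1 : ℤ) ≤ k) h2
      · exact hγ0 k
      · exact le_rfl
    have hsBnn : ∀ j : ℤ, 0 ≤ sB n j := by
      intro j; rw [hsB]
      split_ifs with h
      · exact le_min (mul_nonneg hρ2max.le (hV2nn j)) (mul_nonneg hμ.le (hGnn j))
      · exact mul_nonneg hμ.le (hGnn j)
    have hsBmono : ∀ j : ℤ, j < 0 → sB n (j - 1) ≤ sB n j := by
      intro j hj
      have hW := htelV2neg j hj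
      rw [hsB n (j - 1), hsB n j]
      split_ifs with h
      · exact min_le_min (mul_le_mul_of_nonneg_left hW hρ2max.le)
          (mul_le_mul_of_nonneg_left (hGmono j) hμ.le)
      · exact mul_le_mul_of_nonneg_left (hGmono j) hμ.le
    -- flux-in bounds for road 2
    have hF2b : ∀ j : ℤ, 0 ≤ j →
        0 ≤ F2 n (j - 1) ∧ F2 n (j - 1) ≤ ρ2max * V2 n (j - 1) := by
      intro j hj
      rw [hF2]
      split_ifs with h
      · have hj0 : j = 0 := by omega
        subst hj0
        have hdBnn : 0 ≤ dB n := by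
          rw [hdB]
          split_ifs with h'
          · exact le_min (mul_nonneg (ih1 (-1) (by omega)).1 (hV2nn (-1))) hμ.le
          · exact hμ.le
        refine ⟨le_min hdBnn (mul_nonneg hρ2max.le (hV2nn (-1))), ?_⟩
        rw [show ((0 : ℤ) - 1) = -1 from by ring]
        exact min_le_right _ _
      · have hj1 : (0 : ℤ) ≤ j - 1 := by omega
        exact ⟨mul_nonneg (ih2 _ hj1).1 (hV2nn _),
          mul_le_mul_of_nonneg_right (ih2 _ hj1).2 (hV2nn _)⟩
    constructor
    · -- road 1
      intro j hj
      rw [hup1 n j hj, hF1 n j, hF1 n (j - 1)]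
      have ha := ih1 j hj
      have hb := ih1 (j - 1) (by omega)
      have hU := hV1le j
      have hUnn := hV1nn j
      have hU'nn := hV1nn (j - 1)
      have hW := hV2le j
      have hWnn := hV2nn j
      have hW'nn := hV2nn (j - 1)
      have htel := htelV1 j hj
      have hWm := htelV2neg j hj
      have hs' := hsBnn (j - 1)
      have hsm := hsBmono j hj
      have hlip := hv1lip (ρ1 n j) ha.2
      have hα : 0 ≤ ρ1max - ρ1 n j := by linarith [ha.2]
      constructor
      · -- lower bound
        have hm1 : min (ρ1 n j * V2 n j) (sB n j) ≤ ρ1 n j * V2 n j := min_le_left _ _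
        have hm2 : 0 ≤ min (ρ1 n (j - 1) * V2 n (j - 1)) (sB n (j - 1)) :=
          le_min (mul_nonneg hb.1 hW'nn) hs'
        have hb0 : 0 ≤ ρ1 n (j - 1) * V1 n (j - 1) := mul_nonneg hb.1 hU'nn
        have hUWle : Δt / Δx * V1 n j + Δt / Δx * V2 n j ≤ 1 := by
          nlinarith [mul_le_mul_of_nonneg_left hU hlam, mul_le_mul_of_nonneg_left hW hlam]
        nlinarith [mul_le_mul_of_nonneg_right hUWle ha.1,
          mul_le_mul_of_nonneg_left hm1 hlam, mul_nonneg hlam hm2, mul_nonneg hlam hb0]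
      · -- upper bound
        have h1 : ρ1 n (j - 1) * V1 n (j - 1)
            ≤ ρ1max * V1 n j + ρ1max * (γ 0 * v1 (ρ1 n j)) := by
          nlinarith [mul_le_mul_of_nonneg_right hb.2 hU'nn,
            mul_le_mul_of_nonneg_left htel hρ1max.le]
        have h2 : min (ρ1 n (j - 1) * V2 n (j - 1)) (sB n (j - 1))
            ≤ min (ρ1 n j * V2 n j) (sB n j) + (ρ1max - ρ1 n j) * V2 n j := by
          rcases le_total (ρ1 n j * V2 n j) (sB n j) with hc | hc
          · rw [min_eq_left hc]
            have hml : min (ρ1 n (j - 1) * V2 n (j - 1)) (sB n (j - 1))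
                ≤ ρ1 n (j - 1) * V2 n (j - 1) := min_le_left _ _
            nlinarith [mul_le_mul_of_nonneg_right hb.2 hW'nn,
              mul_le_mul_of_nonneg_left hWm hρ1max.le]
          · rw [min_eq_right hc]
            have hml : min (ρ1 n (j - 1) * V2 n (j - 1)) (sB n (j - 1))
                ≤ sB n (j - 1) := min_le_right _ _
            nlinarith [mul_nonneg hα hWnn]
        have hsum : (ρ1 n (j - 1) * V1 n (j - 1)
              + min (ρ1 n (j - 1) * V2 n (j - 1)) (sB n (j - 1)))
            - (ρ1 n j * V1 n j + min (ρ1 n j * V2 n j) (sB n j))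
            ≤ (ρ1max - ρ1 n j) * (V1 n j + V2 n j)
              + ρ1max * (γ 0 * v1 (ρ1 n j)) := by nlinarith [h1, h2]
        have hbound : (ρ1max - ρ1 n j) * (V1 n j + V2 n j)
              + ρ1max * (γ 0 * v1 (ρ1 n j))
            ≤ (ρ1max - ρ1 n j) * (2 * nv + γ 0 * nv' * ρ1max) := by
          nlinarith [mul_le_mul_of_nonneg_left (add_le_add hU hW) hα,
            mul_le_mul_of_nonneg_left hlip (mul_nonneg hρ1max.le (hγ0 0))]
        have hC : 2 * nv + γ 0 * nv' * ρ1max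
            ≤ γ 0 * nv' * max ρ1max ρ2max + 2 * nv := by
          have := mul_le_mul_of_nonneg_left (le_max_left ρ1max ρ2max)
            (mul_nonneg (hγ0 0) hnv'pos.le)
          linarith
        have hfin : Δt / Δx * ((ρ1max - ρ1 n j) * (2 * nv + γ 0 * nv' * ρ1max))
            ≤ ρ1max - ρ1 n j := by
          nlinarith [mul_le_mul_of_nonneg_left (mul_le_mul_of_nonneg_left hC hα) hlam,
            mul_le_mul_of_nonneg_left hlamD hα]
        have hstep := mul_le_mul_of_nonneg_left hsum hlam
        have hstep2 := mul_le_mul_of_nonneg_left hbound hlam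
        nlinarith [hstep, hstep2, hfin]
    · -- road 2
      intro j hj
      rw [hup2 n j hj, hF2 n j, if_neg (by omega : ¬(j = -1))]
      have ha := ih2 j hj
      have hW := hV2le j
      have hWnn := hV2nn j
      have hFm := hF2b j hj
      have htel := htelV2 j
      rw [if_pos (by omega : (-j : ℤ) ≤ 0)] at htel
      have hlip := hv2lip (ρ2 n j) ha.2
      have hvnn := hv2nn (ρ2 n j) ha.2
      have hα : 0 ≤ ρ2max - ρ2 n j := by linarith [ha.2]
      constructor
      · -- lower bound
        have hlamW1 : Δt / Δx * V2 n j ≤ 1 := by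
          nlinarith [mul_le_mul_of_nonneg_left hW hlam, mul_nonneg hlam hWnn]
        nlinarith [mul_nonneg hlam hFm.1, mul_le_mul_of_nonneg_left hlamW1 ha.1]
      · -- upper bound
        have h1 : F2 n (j - 1) - ρ2 n j * V2 n j
            ≤ (ρ2max - ρ2 n j) * V2 n j + ρ2max * (γ 0 * v2 (ρ2 n j)) := by
          nlinarith [hFm.2, mul_le_mul_of_nonneg_left htel hρ2max.le]
        have hbound : (ρ2max - ρ2 n j) * V2 n j + ρ2max * (γ 0 * v2 (ρ2 n j))
            ≤ (ρ2max - ρ2 n j) * (2 * nv + γ 0 * nv' * ρ2max) := by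
          nlinarith [mul_le_mul_of_nonneg_left hW hα,
            mul_le_mul_of_nonneg_left hlip (mul_nonneg hρ2max.le (hγ0 0)),
            mul_nonneg hα hnvpos.le]
        have hC : 2 * nv + γ 0 * nv' * ρ2max
            ≤ γ 0 * nv' * max ρ1max ρ2max + 2 * nv := by
          have := mul_le_mul_of_nonneg_left (le_max_right ρ1max ρ2max)
            (mul_nonneg (hγ0 0) hnv'pos.le)
          linarith
        have hfin : Δt / Δx * ((ρ2max - ρ2 n j) * (2 * nv + γ 0 * nv' * ρ2max))
            ≤ ρ2max - ρ2 n j := by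
          nlinarith [mul_le_mul_of_nonneg_left (mul_le_mul_of_nonneg_left hC hα) hlam,
            mul_le_mul_of_nonneg_left hlamD hα]
        have hstep := mul_le_mul_of_nonneg_left h1 hlam
        have hstep2 := mul_le_mul_of_nonneg_left hbound hlam
        nlinarith [hstep, hstep2, hfin]
end

section
/- If μ ≥ ρ¹_max v²_max, v₂(ρ) = v²_max(1 − ρ/ρ²_max), and 0 ≤ ρ₁(t,x) ≤ ρ¹_max for all (t,x), then for the non-local buffer model with r(0) = 0 the buffer satisfies r'(t) = 0 for all t ≥ 0, i.e., the buffer remains empty: min(s_B(t,0⁻), ρ₁(t,0⁻)V₂(t,0)) = min(d_B(t), ρ²_max V₂(t,0)). -/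
/-- Free-flow case with empty buffer: if `μ ≥ ρ¹_max v²_max`, `ρ¹_max ≤ ρ²_max`,
`0 ≤ ρ₁(t,0⁻) ≤ ρ¹_max` and `0 ≤ V₂(t,0) ≤ v²_max`, then with `s_B = μ` and
`d_B = min(ρ₁V₂, μ)` the buffer derivative vanishes:
`min(s_B, ρ₁V₂) = min(d_B, ρ²_max V₂)`, i.e. `r'(t) = 0` for all `t ≥ 0`. -/
theorem stmt_6 (μ ρ1max ρ2max v2max : ℝ) (ρ1 V2 : ℝ → ℝ)
    (hcap : ρ1max * v2max ≤ μ)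
    (hρρ : ρ1max ≤ ρ2max)
    (hρ1 : ∀ t : ℝ, 0 ≤ ρ1 t ∧ ρ1 t ≤ ρ1max)
    (hV2 : ∀ t : ℝ, 0 ≤ V2 t ∧ V2 t ≤ v2max) :
    ∀ t : ℝ, 0 ≤ t →
      min μ (ρ1 t * V2 t) = min (min (ρ1 t * V2 t) μ) (ρ2max * V2 t) := by
  intro t _
  obtain ⟨h1, h2⟩ := hρ1 t
  obtain ⟨h3, h4⟩ := hV2 t
  have hle : ρ1 t * V2 t ≤ μ :=
    le_trans (mul_le_mul h2 h4 h3 (le_trans h1 h2)) hcap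
  have hle2 : ρ1 t * V2 t ≤ ρ2max * V2 t :=
    mul_le_mul_of_nonneg_right (le_trans h2 hρρ) h3
  rw [min_eq_right hle, min_eq_left hle, min_eq_left hle2]
end
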